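/- arXiv:2111.05160 — 4 statements merged into one kernel-verified Lean document; each statement's English description precedes it below -/
import Mathlib

section
/- Assume 𝔯 : [0,∞) → ℝ is convex and nonincreasing. Then for every integer M ≥ 1 and every D ≥ 0, the optimal value of problem (7) with leakage constraint L = 1/M equals M·𝔯(D), i.e. V(D, 1/M) = M·𝔯(D). -/
open scoped BigOperators

/-- The optimal value `V(D, L)` of problem (7): minimize
`∑_q P_Q(q) ∑_m 𝔯(D_q^{(m)})` over all finite query sets (modeled as `Fin n`), all
conditional probability matrices `P` and nonnegative distortion values `Dq`, subject to the
leakage constraint `(1/M) ∑_q max_m P(q|m) ≤ L` and the distortion constraint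
`(1/M) ∑_q ∑_m P(q|m) D_q^{(m)} ≤ D`. -/
noncomputable def Vopt (M : ℕ) (r : ℝ → ℝ) (D L : ℝ) : ℝ :=
  sInf { v : ℝ | ∃ (n : ℕ) (P : Fin M → Fin n → ℝ) (Dq : Fin M → Fin n → ℝ),
    (∀ m q, 0 ≤ P m q) ∧
    (∀ m, ∑ q, P m q = 1) ∧
    (∀ m q, 0 ≤ Dq m q) ∧
    (1 / (M : ℝ)) * (∑ q, ⨆ m, P m q) ≤ L ∧
    (1 / (M : ℝ)) * (∑ q, ∑ m, P m q * Dq m q) ≤ D ∧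
    v = ∑ q, ((1 / (M : ℝ)) * ∑ m, P m q) * ∑ m, r (Dq m q) }

/-- Corollary 2, "no-leakage" case: if `𝔯` is convex and nonincreasing on
`[0, ∞)`, then the optimal value of problem (7) with leakage constraint `L = 1/M` is
`M · 𝔯(D)`. -/
theorem no_leakage_value (r : ℝ → ℝ)
    (hconv : ConvexOn ℝ (Set.Ici (0 : ℝ)) r)
    (hmono : AntitoneOn r (Set.Ici (0 : ℝ)))
    (M : ℕ) (hM : 1 ≤ M) (D : ℝ) (hD : 0 ≤ D) :
    Vopt M r D (1 / (M : ℝ)) = (M : ℝ) * r D := by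
  have hMpos : (0:ℝ) < M := by exact_mod_cast hM
  have hMne : (M:ℝ) ≠ 0 := ne_of_gt hMpos
  haveI : Nonempty (Fin M) := ⟨⟨0, hM⟩⟩
  rw [Vopt]
  set S := { v : ℝ | ∃ (n : ℕ) (P : Fin M → Fin n → ℝ) (Dq : Fin M → Fin n → ℝ),
    (∀ m q, 0 ≤ P m q) ∧
    (∀ m, ∑ q, P m q = 1) ∧
    (∀ m q, 0 ≤ Dq m q) ∧
    (1 / (M : ℝ)) * (∑ q, ⨆ m, P m q) ≤ 1 / (M : ℝ) ∧
    (1 / (M : ℝ)) * (∑ q, ∑ m, P m q * Dq m q) ≤ D ∧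
    v = ∑ q, ((1 / (M : ℝ)) * ∑ m, P m q) * ∑ m, r (Dq m q) } with hS
  -- membership
  have hmem : (M : ℝ) * r D ∈ S := by
    refine ⟨1, fun _ _ => 1, fun _ _ => D, fun _ _ => zero_le_one, fun m => by simp,
      fun _ _ => hD, ?_, ?_, ?_⟩
    · simp [ciSup_const]
    · simp
      rw [inv_mul_cancel_left₀ hMne]
    · simp
      field_simp
  -- lower bound
  have hlb : ∀ v ∈ S, (M : ℝ) * r D ≤ v := by
    rintro v ⟨n, P, Dq, hP0, hP1, hDq0, hleak, hdist, hv⟩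
    have hbdd : ∀ q : Fin n, BddAbove (Set.range fun m => P m q) :=
      fun q => Set.Finite.bddAbove (Set.finite_range _)
    have hle : ∀ m q, P m q ≤ ⨆ m', P m' q := fun m q => le_ciSup (hbdd q) m
    have hsum_le : (∑ q, ⨆ m, P m q) ≤ 1 := by
      have h := mul_le_mul_of_nonneg_left hleak (le_of_lt hMpos)
      rw [← mul_assoc, mul_one_div_cancel hMne, one_mul] at h
      calc (∑ q, ⨆ m, P m q) = (M:ℝ) * (1/(M:ℝ)) * (∑ q, ⨆ m, P m q) := by
            rw [mul_one_div_cancel hMne, one_mul]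
        _ = (M:ℝ) * ((1/(M:ℝ)) * (∑ q, ⨆ m, P m q)) := by ring
        _ ≤ (M:ℝ) * (1/(M:ℝ)) := mul_le_mul_of_nonneg_left hleak (le_of_lt hMpos)
        _ = 1 := mul_one_div_cancel hMne
    have hsum_ge : ∀ m : Fin M, (1:ℝ) ≤ ∑ q, ⨆ m', P m' q := by
      intro m
      calc (1:ℝ) = ∑ q, P m q := (hP1 m).symm
        _ ≤ ∑ q, ⨆ m', P m' q := Finset.sum_le_sum fun q _ => hle m q
    have hPeq : ∀ m q, P m q = ⨆ m', P m' q := by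
      intro m q
      have hzero : ∑ q, ((⨆ m', P m' q) - P m q) = 0 := by
        rw [Finset.sum_sub_distrib, hP1 m]
        linarith [hsum_le, hsum_ge m]
      have := (Finset.sum_eq_zero_iff_of_nonneg
        (fun q _ => sub_nonneg.2 (hle m q))).1 hzero q (Finset.mem_univ q)
      linarith
    set s : Fin n → ℝ := fun q => ⨆ m', P m' q with hs
    have hs0 : ∀ q, 0 ≤ s q := fun q =>
      le_trans (hP0 (Classical.arbitrary _) q) (hle _ q)
    have hs1 : ∑ q, s q = 1 := by
      rw [show (∑ q, s q) = ∑ q, P (Classical.arbitrary _) q from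
        Finset.sum_congr rfl fun q _ => (hPeq _ q).symm, hP1]
    set E : Fin M → ℝ := fun m => ∑ q, s q * Dq m q with hE
    have hE0 : ∀ m, 0 ≤ E m := fun m =>
      Finset.sum_nonneg fun q _ => mul_nonneg (hs0 q) (hDq0 m q)
    have hEavg : (1 / (M : ℝ)) * ∑ m, E m ≤ D := by
      calc (1 / (M : ℝ)) * ∑ m, E m
          = (1 / (M : ℝ)) * (∑ q, ∑ m, P m q * Dq m q) := by
            congr 1
            rw [Finset.sum_comm]
            exact Finset.sum_congr rfl fun q _ =>
              Finset.sum_congr rfl fun m _ => by rw [hPeq m q]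
        _ ≤ D := hdist
    have hjensen : ∀ m, r (E m) ≤ ∑ q, s q * r (Dq m q) := by
      intro m
      have := hconv.map_sum_le (t := Finset.univ) (w := s) (p := fun q => Dq m q)
        (fun q _ => hs0 q) hs1 (fun q _ => hDq0 m q)
      simpa [smul_eq_mul] using this
    have hveq : v = ∑ m, ∑ q, s q * r (Dq m q) := by
      rw [hv, Finset.sum_comm]
      refine Finset.sum_congr rfl fun q _ => ?_
      rw [← Finset.mul_sum]
      congr 1
      have : ∑ m, P m q = (M:ℝ) * s q := by
        rw [Finset.sum_congr rfl fun m _ => hPeq m q]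
        simp [Finset.sum_const, Finset.card_univ, mul_comm]
        exact Or.inl rfl
      rw [this, ← mul_assoc, one_div, inv_mul_cancel₀ hMne, one_mul]
    -- second Jensen over m
    have hw : ∑ _m : Fin M, (1/(M:ℝ)) = 1 := by
      simp [Finset.sum_const, Finset.card_univ]
      field_simp
    have hjensen2 : r ((1/(M:ℝ)) * ∑ m, E m) ≤ (1/(M:ℝ)) * ∑ m, r (E m) := by
      have := hconv.map_sum_le (t := Finset.univ) (w := fun _ => 1/(M:ℝ)) (p := E)
        (fun _ _ => by positivity) hw (fun m _ => hE0 m)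
      simpa [smul_eq_mul, Finset.mul_sum] using this
    have havg0 : (0:ℝ) ≤ (1/(M:ℝ)) * ∑ m, E m := by
      apply mul_nonneg (by positivity) (Finset.sum_nonneg fun m _ => hE0 m)
    have hmonostep : r D ≤ r ((1/(M:ℝ)) * ∑ m, E m) :=
      hmono havg0 hD hEavg
    calc (M:ℝ) * r D ≤ (M:ℝ) * r ((1/(M:ℝ)) * ∑ m, E m) :=
          mul_le_mul_of_nonneg_left hmonostep (le_of_lt hMpos)
      _ ≤ (M:ℝ) * ((1/(M:ℝ)) * ∑ m, r (E m)) :=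
          mul_le_mul_of_nonneg_left hjensen2 (le_of_lt hMpos)
      _ = ∑ m, r (E m) := by
          rw [← mul_assoc, mul_one_div_cancel hMne, one_mul]
      _ ≤ ∑ m, ∑ q, s q * r (Dq m q) := Finset.sum_le_sum fun m _ => hjensen m
      _ = v := hveq.symm
  exact le_antisymm (csInf_le ⟨(M:ℝ) * r D, fun v hv => hlb v hv⟩ hmem)
    (le_csInf ⟨_, hmem⟩ hlb)
end

section
/- Let S be an LWPIR scheme for M files of β symbols over X with rate R, leakage L, and per-file distortions D^{(1)},…,D^{(M)}, and let D = (1/M)∑_{m=1}^M D^{(m)} be its distortion. Then there exists an LWPIR scheme S' (for the same M, β, X, X̂, d) with rate R, leakage L, and per-file distortions all equal: D'^{(m)} = D for every m ∈ {1,…,M}. -/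
open scoped BigOperators

noncomputable section

/-- Expectation of `g` when the `M` files, each of `β` symbols from `X`, are independent and
uniformly distributed (i.e. the tuple of files is uniform on `(X^β)^M`). -/
def uexp (M β : ℕ) (X : Type) [Fintype X] (g : (Fin M → Fin β → X) → ℝ) : ℝ :=
  (∑ x : Fin M → Fin β → X, g x) / (Fintype.card (Fin M → Fin β → X) : ℝ)

/-- An LWPIR scheme for `M` files of `β` symbols from the source alphabet `X`, with
reconstruction alphabet `Xhat`: a finite query set `Fin nQ`, conditional query
probabilities `P`, a finite answer alphabet `Fin nA`, per-query answer functions `ans`,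
per-query length functions `len` satisfying the Kraft inequality, and per-query per-file
decoders `dec`. -/
structure LWPIR (M β : ℕ) (X Xhat : Type) where
  nQ : ℕ
  nA : ℕ
  P : Fin M → Fin nQ → ℝ
  P_nonneg : ∀ m q, 0 ≤ P m q
  P_sum : ∀ m, ∑ q, P m q = 1
  ans : Fin nQ → (Fin M → Fin β → X) → Fin nA
  len : Fin nQ → Fin nA → ℕ
  kraft : ∀ q, ∑ a, ((1 : ℝ) / 2) ^ (len q a) ≤ 1
  dec : Fin nQ → Fin M → Fin nA → Fin β → Xhat

namespace LWPIR

variable {M β : ℕ} {X Xhat : Type} [Fintype X]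

/-- `P_Q(q) = (1/M) ∑_m P(q|m)`. -/
def PQ (S : LWPIR M β X Xhat) (q : Fin S.nQ) : ℝ :=
  (1 / (M : ℝ)) * ∑ m, S.P m q

/-- Download rate `R = (1/β) ∑_q P_Q(q) E[ℓ_q(A_q(X))]`. -/
def rate (S : LWPIR M β X Xhat) : ℝ :=
  (1 / (β : ℝ)) * ∑ q, S.PQ q * uexp M β X (fun x => (S.len q (S.ans q x) : ℝ))

/-- Per-file distortion `D^{(m)}`. -/
def perFileDistortion (d : X → Xhat → ℝ) (S : LWPIR M β X Xhat) (m : Fin M) : ℝ :=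
  (1 / (β : ℝ)) * ∑ q, S.P m q *
    uexp M β X (fun x => ∑ i, d (x m i) (S.dec q m (S.ans q x) i))

/-- Distortion `D = (1/M) ∑_m D^{(m)}`. -/
def distortion (d : X → Xhat → ℝ) (S : LWPIR M β X Xhat) : ℝ :=
  (1 / (M : ℝ)) * ∑ m, S.perFileDistortion d m

/-- Leakage `L = (1/M) ∑_q max_m P(q|m)`. -/
def leakage (S : LWPIR M β X Xhat) : ℝ :=
  (1 / (M : ℝ)) * ∑ q, ⨆ m, S.P m q

end LWPIR

section Aux

variable {M β : ℕ} {X : Type} [Fintype X] [NeZero M]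

/-- Cyclic shift of the file tuple. -/
def shiftEquiv (β : ℕ) (X : Type) (k : Fin M) :
    (Fin M → Fin β → X) ≃ (Fin M → Fin β → X) where
  toFun x := fun j => x (j - k)
  invFun x := fun j => x (j + k)
  left_inv x := funext fun j => by simp
  right_inv x := funext fun j => by simp

lemma uexp_shift (k : Fin M) (g : (Fin M → Fin β → X) → ℝ) :
    uexp M β X (fun x => g (fun j => x (j - k))) = uexp M β X g := by
  unfold uexp
  congr 1
  exact Equiv.sum_comp (shiftEquiv β X k) g

end Aux

/-- Proposition 1, uniform distortion: any LWPIR scheme can be transformed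
into one with the same rate and leakage whose per-file distortions are all equal to the
original scheme's (average) distortion. -/
theorem uniform_distortion
    (M β : ℕ) (hM : 1 ≤ M) (hβ : 1 ≤ β)
    (X Xhat : Type) [Fintype X] [Fintype Xhat]
    (d : X → Xhat → ℝ) (hd : ∀ x y, 0 ≤ d x y)
    (S : LWPIR M β X Xhat) :
    ∃ S' : LWPIR M β X Xhat,
      S'.rate = S.rate ∧
      S'.leakage = S.leakage ∧
      ∀ m, S'.perFileDistortion d m = S.distortion d := by
  haveI : NeZero M := ⟨by omega⟩
  have hM0 : (M : ℝ) ≠ 0 := by positivity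
  set e : Fin S.nQ × Fin M ≃ Fin (S.nQ * M) := finProdFinEquiv with he
  set S' : LWPIR M β X Xhat := {
    nQ := S.nQ * M
    nA := S.nA
    P := fun m q' => (1 / (M : ℝ)) * S.P (m + (e.symm q').2) (e.symm q').1
    P_nonneg := fun m q' => mul_nonneg (by positivity) (S.P_nonneg _ _)
    P_sum := fun m => by
      rw [← Equiv.sum_comp e (fun q' => (1 / (M : ℝ)) * S.P (m + (e.symm q').2) (e.symm q').1)]
      simp only [Equiv.symm_apply_apply]
      rw [Fintype.sum_prod_type_right]
      simp only [← Finset.mul_sum, S.P_sum]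
      simp [Finset.card_univ, mul_comm, mul_one]
    ans := fun q' x => S.ans (e.symm q').1 (fun j => x (j - (e.symm q').2))
    len := fun q' => S.len (e.symm q').1
    kraft := fun q' => S.kraft (e.symm q').1
    dec := fun q' m => S.dec (e.symm q').1 (m + (e.symm q').2)
  } with hS'
  refine ⟨S', ?_, ?_, ?_⟩
  · -- rate
    have key : ∀ p : Fin S.nQ × Fin M,
        S'.PQ (e p) * uexp M β X (fun x => (S'.len (e p) (S'.ans (e p) x) : ℝ))
          = (1 / (M : ℝ)) *
            (S.PQ p.1 * uexp M β X (fun x => (S.len p.1 (S.ans p.1 x) : ℝ))) := by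
      intro p
      have h2 : e.symm (e p) = p := e.symm_apply_apply p
      have hu : uexp M β X
            (fun x => ((S.len p.1 (S.ans p.1 (fun j => x (j - p.2)))) : ℝ))
          = uexp M β X (fun x => ((S.len p.1 (S.ans p.1 x)) : ℝ)) :=
        uexp_shift p.2 (fun y => ((S.len p.1 (S.ans p.1 y)) : ℝ))
      have hP : ∑ m : Fin M, S.P (m + p.2) p.1 = ∑ m : Fin M, S.P m p.1 :=
        Equiv.sum_comp (Equiv.addRight p.2) (fun m => S.P m p.1)
      simp only [S', LWPIR.PQ, h2]
      rw [hu, ← Finset.mul_sum, hP]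
      ring
    calc S'.rate
        = (1 / (β : ℝ)) * ∑ p : Fin S.nQ × Fin M,
            S'.PQ (e p) * uexp M β X (fun x => (S'.len (e p) (S'.ans (e p) x) : ℝ)) := by
          rw [LWPIR.rate, Equiv.sum_comp e
            (fun q' => S'.PQ q' * uexp M β X (fun x => (S'.len q' (S'.ans q' x) : ℝ)))]
      _ = (1 / (β : ℝ)) * ∑ p : Fin S.nQ × Fin M, (1 / (M : ℝ)) *
            (S.PQ p.1 * uexp M β X (fun x => (S.len p.1 (S.ans p.1 x) : ℝ))) := by
          rw [Finset.sum_congr rfl (fun p _ => key p)]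
      _ = S.rate := by
          rw [LWPIR.rate, Fintype.sum_prod_type]
          simp only [Finset.sum_const, Finset.card_univ, Fintype.card_fin, nsmul_eq_mul]
          rw [← Finset.mul_sum, ← Finset.mul_sum]
          field_simp
  · -- leakage
    have key : ∀ p : Fin S.nQ × Fin M,
        (⨆ m, S'.P m (e p)) = (1 / (M : ℝ)) * ⨆ m, S.P m p.1 := by
      intro p
      have h2 : e.symm (e p) = p := e.symm_apply_apply p
      have hsup : (⨆ m, S.P (m + p.2) p.1) = ⨆ m, S.P m p.1 :=
        (Equiv.addRight p.2).surjective.iSup_comp (fun m => S.P m p.1)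
      simp only [S', h2]
      rw [← Real.mul_iSup_of_nonneg (by positivity) (fun m => S.P (m + p.2) p.1), hsup]
    calc S'.leakage
        = (1 / (M : ℝ)) * ∑ p : Fin S.nQ × Fin M, ⨆ m, S'.P m (e p) := by
          rw [LWPIR.leakage, Equiv.sum_comp e (fun q' => ⨆ m, S'.P m q')]
      _ = (1 / (M : ℝ)) * ∑ p : Fin S.nQ × Fin M, (1 / (M : ℝ)) * ⨆ m, S.P m p.1 := by
          rw [Finset.sum_congr rfl (fun p _ => key p)]
      _ = S.leakage := by
          rw [LWPIR.leakage, Fintype.sum_prod_type]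
          simp only [Finset.sum_const, Finset.card_univ, Fintype.card_fin, nsmul_eq_mul]
          rw [← Finset.mul_sum, ← Finset.mul_sum]
          field_simp
  · -- per-file distortion
    intro m
    have key : ∀ p : Fin S.nQ × Fin M,
        S'.P m (e p) * uexp M β X
            (fun x => ∑ i, d (x m i) (S'.dec (e p) m (S'.ans (e p) x) i))
          = (1 / (M : ℝ)) * (S.P (m + p.2) p.1 * uexp M β X
            (fun x => ∑ i, d (x (m + p.2) i) (S.dec p.1 (m + p.2) (S.ans p.1 x) i))) := by
      intro p
      have h2 : e.symm (e p) = p := e.symm_apply_apply p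
      have hu : uexp M β X
            (fun x => ∑ i, d (x m i)
              (S.dec p.1 (m + p.2) (S.ans p.1 (fun j => x (j - p.2))) i))
          = uexp M β X (fun x => ∑ i, d (x (m + p.2) i)
              (S.dec p.1 (m + p.2) (S.ans p.1 x) i)) := by
        have := uexp_shift p.2
          (fun y => ∑ i, d (y (m + p.2) i) (S.dec p.1 (m + p.2) (S.ans p.1 y) i))
        simpa [add_sub_cancel_right] using this
      simp only [S', h2]
      rw [hu]
      ring
    calc S'.perFileDistortion d m
        = (1 / (β : ℝ)) * ∑ p : Fin S.nQ × Fin M,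
            S'.P m (e p) * uexp M β X
              (fun x => ∑ i, d (x m i) (S'.dec (e p) m (S'.ans (e p) x) i)) := by
          rw [LWPIR.perFileDistortion, Equiv.sum_comp e
            (fun q' => S'.P m q' * uexp M β X
              (fun x => ∑ i, d (x m i) (S'.dec q' m (S'.ans q' x) i)))]
      _ = (1 / (β : ℝ)) * ∑ p : Fin S.nQ × Fin M, (1 / (M : ℝ)) *
            (S.P (m + p.2) p.1 * uexp M β X
              (fun x => ∑ i, d (x (m + p.2) i) (S.dec p.1 (m + p.2) (S.ans p.1 x) i))) := by
          rw [Finset.sum_congr rfl (fun p _ => key p)]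
      _ = (1 / (M : ℝ)) * ∑ k : Fin M, S.perFileDistortion d (m + k) := by
          rw [Fintype.sum_prod_type_right]
          simp only [LWPIR.perFileDistortion, Finset.mul_sum]
          refine Finset.sum_congr rfl fun k _ => ?_
          refine Finset.sum_congr rfl fun q _ => ?_
          ring
      _ = S.distortion d := by
          rw [LWPIR.distortion]
          congr 1
          exact Equiv.sum_comp (Equiv.addLeft m) (fun m' => S.perFileDistortion d m')
end
end

section
/- Consider the LP (8) with data M, Q, (R_q), (D_q^{(m)}), D, L, and let Q_v = {q ∈ Q : c_q is an extreme point of the convex hull of {c_{q'} : q' ∈ Q} ∪ {c_max}}. Then for every feasible solution (p, ξ) of the LP there exists a feasible solution (p', ξ') with p'_{qm} = 0 for every q ∉ Q_v and every m ∈ {1,…,M}, whose objective value is not larger than that of (p, ξ). In particular, the optimal value of the LP is unchanged if one restricts all variables p_{qm} with q ∉ Q_v to be zero. -/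
open scoped BigOperators

noncomputable section

/-- The point `c_q = (R_q, D_q^{(1)}, …, D_q^{(M)}) ∈ ℝ^{M+1}` associated with query `q`. -/
def lpPoint (M n : ℕ) (R : Fin n → ℝ) (Dmat : Fin M → Fin n → ℝ) (q : Fin n) :
    Fin (M + 1) → ℝ :=
  Fin.cons (R q) (fun m => Dmat m q)

/-- The componentwise maximum `c_max` of the points `c_q`, `q ∈ Q`. -/
def lpPointMax (M n : ℕ) (R : Fin n → ℝ) (Dmat : Fin M → Fin n → ℝ) :
    Fin (M + 1) → ℝ :=
  fun i => ⨆ q, lpPoint M n R Dmat q i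

/-- `Q_v`: the queries whose point `c_q` is an extreme point (vertex) of the convex hull of
`{c_{q'} : q' ∈ Q} ∪ {c_max}`. -/
def lpVertexQueries (M n : ℕ) (R : Fin n → ℝ) (Dmat : Fin M → Fin n → ℝ) :
    Set (Fin n) :=
  { q | lpPoint M n R Dmat q ∈ Set.extremePoints ℝ
      (convexHull ℝ (Set.range (lpPoint M n R Dmat) ∪ {lpPointMax M n R Dmat})) }

/-- Feasibility for the LP (8): `∑_q p_{qm} = 1` for each `m`, the distortion and leakage
constraints, and `0 ≤ p_{qm} ≤ ξ_q`. -/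
def lpFeasible (M n : ℕ) (Dmat : Fin M → Fin n → ℝ) (D L : ℝ)
    (p : Fin M → Fin n → ℝ) (ξ : Fin n → ℝ) : Prop :=
  (∀ m, ∑ q, p m q = 1) ∧
  (1 / (M : ℝ)) * (∑ m, ∑ q, p m q * Dmat m q) ≤ D ∧
  (1 / (M : ℝ)) * (∑ q, ξ q) ≤ L ∧
  ∀ m q, 0 ≤ p m q ∧ p m q ≤ ξ q

/-- The objective value of the LP (8). -/
def lpObjective (M n : ℕ) (R : Fin n → ℝ) (p : Fin M → Fin n → ℝ) : ℝ :=
  (1 / (M : ℝ)) * ∑ m, ∑ q, p m q * R q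

lemma lp_vertex_decomp (M n : ℕ) (R : Fin n → ℝ) (Dmat : Fin M → Fin n → ℝ)
    (hn : 0 < n) (q : Fin n) :
    ∃ w : Fin n → ℝ, (∀ q', 0 ≤ w q') ∧
      (∀ q' ∉ lpVertexQueries M n R Dmat, w q' = 0) ∧
      (∑ q', w q' = 1) ∧
      ∀ i, ∑ q', w q' * lpPoint M n R Dmat q' i ≤ lpPoint M n R Dmat q i := by
  classical
  haveI : Nonempty (Fin n) := ⟨⟨0, hn⟩⟩
  set f := lpPoint M n R Dmat with hf
  set cmax := lpPointMax M n R Dmat with hcmax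
  have hle : ∀ q' i, f q' i ≤ cmax i := fun q' i =>
    le_ciSup (f := fun q'' => f q'' i) (Set.Finite.bddAbove (Set.finite_range _)) q'
  set A : Set (Fin (M+1) → ℝ) := Set.range f ∪ {cmax} with hA
  have hAfin : A.Finite := (Set.finite_range f).union (Set.finite_singleton _)
  set S := convexHull ℝ A with hS
  have hScomp : IsCompact S := hAfin.isCompact_convexHull (𝕜 := ℝ)
  have hSconv : Convex ℝ S := convex_convexHull ℝ A
  set E := S.extremePoints ℝ with hE
  have hEA : E ⊆ A := extremePoints_convexHull_subset
  have hEfin : E.Finite := hAfin.subset hEA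
  have hKM : convexHull ℝ E = S := by
    have h := closure_convexHull_extremePoints hScomp hSconv
    rwa [IsClosed.closure_eq (hEfin.isClosed_convexHull (𝕜 := ℝ))] at h
  have hfq_mem : ∀ q', f q' ∈ S := fun q' => subset_convexHull ℝ A (Or.inl ⟨q', rfl⟩)
  have hQv : ∃ q0, q0 ∈ lpVertexQueries M n R Dmat := by
    by_contra h
    push_neg at h
    have h' : ∀ q', f q' ∉ E := h
    have hE1 : E = {cmax} := by
      apply Set.eq_singleton_iff_nonempty_unique_mem.2
      refine ⟨hScomp.extremePoints_nonempty ⟨f q, hfq_mem q⟩, ?_⟩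
      intro y hy
      rcases hEA hy with ⟨q', rfl⟩ | hy'
      · exact absurd hy (h' q')
      · exact hy'
    have hSsing : S = {cmax} := by
      rw [← hKM, hE1, convexHull_singleton]
    have : f q = cmax := by
      have := hfq_mem q
      rw [hSsing] at this
      exact this
    exact h' q (by rw [this, hE1]; rfl)
  obtain ⟨q0, hq0⟩ := hQv
  have hmem : f q ∈ convexHull ℝ (hEfin.toFinset : Set (Fin (M+1) → ℝ)) := by
    rw [Set.Finite.coe_toFinset, hKM]; exact hfq_mem q
  rw [Finset.convexHull_eq] at hmem
  obtain ⟨w0, hw00, hw01, hwcm⟩ := hmem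
  set g : (Fin (M+1) → ℝ) → Fin n := fun y =>
    if h : ∃ q', q' ∈ lpVertexQueries M n R Dmat ∧ f q' = y then h.choose else q0 with hg
  have hgE : ∀ y ∈ E, g y ∈ lpVertexQueries M n R Dmat ∧ ∀ i, f (g y) i ≤ y i := by
    intro y hy
    by_cases h : ∃ q', q' ∈ lpVertexQueries M n R Dmat ∧ f q' = y
    · have hc := h.choose_spec
      simp only [hg, dif_pos h]
      exact ⟨hc.1, fun i => le_of_eq (by rw [hc.2])⟩
    · have hyc : y = cmax := by
        rcases hEA hy with ⟨q', rfl⟩ | hy'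
        · exact absurd ⟨q', hy, rfl⟩ h
        · exact hy'
      simp only [hg, dif_neg h]
      exact ⟨hq0, fun i => hyc ▸ hle q0 i⟩
  refine ⟨fun q' => ∑ y ∈ hEfin.toFinset, if g y = q' then w0 y else 0, ?_, ?_, ?_, ?_⟩
  · intro q'
    refine Finset.sum_nonneg fun y hy => ?_
    split_ifs
    · exact hw00 y hy
    · exact le_refl 0
  · intro q' hq'
    refine Finset.sum_eq_zero fun y hy => ?_
    rw [if_neg]
    rintro rfl
    exact hq' (hgE y (hEfin.mem_toFinset.1 hy)).1
  · rw [Finset.sum_comm]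
    rw [← hw01]
    refine Finset.sum_congr rfl fun y hy => ?_
    simp [Finset.sum_ite_eq]
  · intro i
    have hval : f q i = ∑ y ∈ hEfin.toFinset, w0 y * y i := by
      rw [← hwcm, Finset.centerMass_eq_of_sum_1 _ _ hw01]
      simp [Finset.sum_apply]
    calc ∑ q', (∑ y ∈ hEfin.toFinset, if g y = q' then w0 y else 0) * f q' i
        = ∑ y ∈ hEfin.toFinset, ∑ q', if g y = q' then w0 y * f q' i else 0 := by
          rw [Finset.sum_comm]
          refine Finset.sum_congr rfl fun q' _ => ?_
          rw [Finset.sum_mul]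
          refine Finset.sum_congr rfl fun y _ => ?_
          rw [ite_mul, zero_mul]
      _ = ∑ y ∈ hEfin.toFinset, w0 y * f (g y) i := by
          refine Finset.sum_congr rfl fun y _ => ?_
          simp [Finset.sum_ite_eq]
      _ ≤ ∑ y ∈ hEfin.toFinset, w0 y * y i := by
          refine Finset.sum_le_sum fun y hy => ?_
          exact mul_le_mul_of_nonneg_left ((hgE y (hEfin.mem_toFinset.1 hy)).2 i)
            (hw00 y hy)
      _ = f q i := hval.symm

lemma lp_swap (n : ℕ) (a b : Fin n → ℝ) (w : Fin n → Fin n → ℝ) :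
    ∑ q', (∑ q, a q * w q q') * b q' = ∑ q, a q * ∑ q', w q q' * b q' := by
  calc ∑ q', (∑ q, a q * w q q') * b q'
      = ∑ q', ∑ q, a q * (w q q' * b q') := by simp_rw [Finset.sum_mul, mul_assoc]
    _ = ∑ q, ∑ q', a q * (w q q' * b q') := Finset.sum_comm
    _ = ∑ q, a q * ∑ q', w q q' * b q' := by simp_rw [← Finset.mul_sum]

lemma lp_filter_step (M : ℕ) (hM : 1 ≤ M) (n : ℕ)
    (R : Fin n → ℝ) (Dmat : Fin M → Fin n → ℝ)
    (hR : ∀ q, 0 ≤ R q)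
    (D L : ℝ)
    (p : Fin M → Fin n → ℝ) (ξ : Fin n → ℝ)
    (hfeas : lpFeasible M n Dmat D L p ξ) :
    ∃ (p' : Fin M → Fin n → ℝ) (ξ' : Fin n → ℝ),
      lpFeasible M n Dmat D L p' ξ' ∧
      (∀ q ∉ lpVertexQueries M n R Dmat, ∀ m, p' m q = 0) ∧
      lpObjective M n R p' ≤ lpObjective M n R p := by
  obtain ⟨hsum, hdist, hleak, hbox⟩ := hfeas
  have m0 : Fin M := ⟨0, hM⟩
  have hn : 0 < n := by
    rcases Nat.eq_zero_or_pos n with h | h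
    · exfalso
      have := hsum m0
      subst h
      simp at this
    · exact h
  choose w hw0 hwsupp hwsum hwle using lp_vertex_decomp M n R Dmat hn
  -- coordinate specializations
  have hwleR : ∀ q, ∑ q', w q q' * R q' ≤ R q := by
    intro q
    have := hwle q 0
    simpa [lpPoint] using this
  have hwleD : ∀ q m, ∑ q', w q q' * Dmat m q' ≤ Dmat m q := by
    intro q m
    have := hwle q (Fin.succ m)
    simpa [lpPoint] using this
  have hMnn : (0:ℝ) ≤ 1 / (M:ℝ) := by positivity
  have hξ0 : ∀ q, 0 ≤ ξ q := fun q => le_trans (hbox m0 q).1 (hbox m0 q).2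
  refine ⟨fun m q' => ∑ q, p m q * w q q', fun q' => ∑ q, ξ q * w q q', ⟨?_, ?_, ?_, ?_⟩, ?_, ?_⟩
  · intro m
    rw [Finset.sum_comm]
    calc ∑ q, ∑ q', p m q * w q q' = ∑ q, p m q * ∑ q', w q q' := by
          simp [Finset.mul_sum]
      _ = 1 := by simp [hwsum, hsum m]
  · refine le_trans (mul_le_mul_of_nonneg_left ?_ hMnn) hdist
    refine Finset.sum_le_sum fun m _ => ?_
    calc ∑ q', (∑ q, p m q * w q q') * Dmat m q'
        = ∑ q, p m q * ∑ q', w q q' * Dmat m q' := lp_swap n _ _ _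
      _ ≤ ∑ q, p m q * Dmat m q := Finset.sum_le_sum fun q _ =>
          mul_le_mul_of_nonneg_left (hwleD q m) (hbox m q).1
  · refine le_trans (le_of_eq ?_) hleak
    congr 1
    rw [Finset.sum_comm]
    calc ∑ q, ∑ q', ξ q * w q q' = ∑ q, ξ q * ∑ q', w q q' := by simp [Finset.mul_sum]
      _ = ∑ q, ξ q := by simp [hwsum]
  · intro m q'
    constructor
    · exact Finset.sum_nonneg fun q _ => mul_nonneg (hbox m q).1 (hw0 q q')
    · exact Finset.sum_le_sum fun q _ => mul_le_mul_of_nonneg_right (hbox m q).2 (hw0 q q')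
  · intro q' hq' m
    exact Finset.sum_eq_zero fun q _ => by rw [hwsupp q q' hq', mul_zero]
  · unfold lpObjective
    refine mul_le_mul_of_nonneg_left ?_ hMnn
    refine Finset.sum_le_sum fun m _ => ?_
    calc ∑ q', (∑ q, p m q * w q q') * R q'
        = ∑ q, p m q * ∑ q', w q q' * R q' := lp_swap n _ _ _
      _ ≤ ∑ q, p m q * R q := Finset.sum_le_sum fun q _ =>
          mul_le_mul_of_nonneg_left (hwleR q) (hbox m q).1

/-- Lemma 1: for every feasible solution of the LP (8) there is a feasible
solution, supported (in `p`) only on the vertex queries `Q_v`, with objective value not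
larger; in particular, the optimal value of the LP is unchanged if all variables `p_{qm}`
with `q ∉ Q_v` are restricted to be zero. -/
theorem lp_vertex_filtering (M : ℕ) (hM : 1 ≤ M) (n : ℕ)
    (R : Fin n → ℝ) (Dmat : Fin M → Fin n → ℝ)
    (hR : ∀ q, 0 ≤ R q) (hDmat : ∀ m q, 0 ≤ Dmat m q)
    (D L : ℝ) (hD : 0 ≤ D) :
    (∀ (p : Fin M → Fin n → ℝ) (ξ : Fin n → ℝ),
      lpFeasible M n Dmat D L p ξ →
      ∃ (p' : Fin M → Fin n → ℝ) (ξ' : Fin n → ℝ),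
        lpFeasible M n Dmat D L p' ξ' ∧
        (∀ q ∉ lpVertexQueries M n R Dmat, ∀ m, p' m q = 0) ∧
        lpObjective M n R p' ≤ lpObjective M n R p) ∧
    sInf { v : ℝ | ∃ (p : Fin M → Fin n → ℝ) (ξ : Fin n → ℝ),
        lpFeasible M n Dmat D L p ξ ∧ v = lpObjective M n R p } =
    sInf { v : ℝ | ∃ (p : Fin M → Fin n → ℝ) (ξ : Fin n → ℝ),
        lpFeasible M n Dmat D L p ξ ∧
        (∀ q ∉ lpVertexQueries M n R Dmat, ∀ m, p m q = 0) ∧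
        v = lpObjective M n R p } := by
  refine ⟨fun p ξ h => lp_filter_step M hM n R Dmat hR D L p ξ h, ?_⟩
  have hobj_nn : ∀ p ξ, lpFeasible M n Dmat D L p ξ → 0 ≤ lpObjective M n R p := by
    intro p ξ hf
    have hMnn : (0:ℝ) ≤ 1 / (M:ℝ) := by positivity
    refine mul_nonneg hMnn (Finset.sum_nonneg fun m _ => Finset.sum_nonneg fun q _ =>
      mul_nonneg (hf.2.2.2 m q).1 (hR q))
  set S1 := { v : ℝ | ∃ (p : Fin M → Fin n → ℝ) (ξ : Fin n → ℝ),
        lpFeasible M n Dmat D L p ξ ∧ v = lpObjective M n R p } with hS1def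
  set S2 := { v : ℝ | ∃ (p : Fin M → Fin n → ℝ) (ξ : Fin n → ℝ),
        lpFeasible M n Dmat D L p ξ ∧
        (∀ q ∉ lpVertexQueries M n R Dmat, ∀ m, p m q = 0) ∧
        v = lpObjective M n R p } with hS2def
  have hsub : S2 ⊆ S1 := by
    rintro v ⟨p, ξ, hf, _, hv⟩
    exact ⟨p, ξ, hf, hv⟩
  have hbdd : BddBelow S1 := by
    refine ⟨0, ?_⟩
    rintro v ⟨p, ξ, hf, rfl⟩
    exact hobj_nn p ξ hf
  rcases Set.eq_empty_or_nonempty S1 with h1 | h1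
  · have h2 : S2 = ∅ := Set.subset_empty_iff.1 (h1 ▸ hsub)
    rw [h1, h2]
  · have h2 : S2.Nonempty := by
      obtain ⟨v, p, ξ, hf, rfl⟩ := h1
      obtain ⟨p', ξ', hf', hsupp', _⟩ := lp_filter_step M hM n R Dmat hR D L p ξ hf
      exact ⟨lpObjective M n R p', p', ξ', hf', hsupp', rfl⟩
    refine le_antisymm (csInf_le_csInf hbdd h2 hsub) (le_csInf h1 ?_)
    rintro v ⟨p, ξ, hf, rfl⟩
    obtain ⟨p', ξ', hf', hsupp', hle⟩ := lp_filter_step M hM n R Dmat hR D L p ξ hf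
    exact le_trans (csInf_le (hbdd.mono hsub) ⟨p', ξ', hf', hsupp', rfl⟩) hle
end
end

section
/- Let M ≥ 1 be an integer, 𝔯 : [0,∞) → ℝ a function, Q a finite query set, (P(q|m)) a conditional probability matrix on Q, and D_q^{(m)} ≥ 0 given reals. Then there exist nonnegative weights (c_q)_{q∈Q} that vanish outside a subset Q' ⊆ Q with |Q'| ≤ M + 3, such that P'(q|m) := c_q·P(q|m) is again a conditional probability matrix (i.e. ∑_{q∈Q} c_q·P(q|m) = 1 for every m ∈ {1,…,M}), and the three quantities ∑_{q∈Q} P_Q(q)·∑_{m=1}^M 𝔯(D_q^{(m)}) (objective), (1/M)∑_{q∈Q}∑_{m=1}^M P(q|m)·D_q^{(m)} (distortion), and (1/M)∑_{q∈Q} max_m P(q|m) (leakage) are unchanged when P is replaced by P'. Hence, in problem (7), restricting to query sets of size at most M + 3 does not change the optimal value. -/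
open scoped BigOperators

open scoped Classical
open Finset


private lemma cone_caratheodory {n : ℕ} {κ : Type*} [Fintype κ] (v : Fin n → κ → ℝ) :
    ∀ (N : ℕ) (c : Fin n → ℝ), (univ.filter fun i => c i ≠ 0).card ≤ N → (∀ i, 0 ≤ c i) →
    ∃ c' : Fin n → ℝ, (∀ i, 0 ≤ c' i) ∧
      (univ.filter fun i => c' i ≠ 0).card ≤ Fintype.card κ ∧
      ∀ k, ∑ i, c' i * v i k = ∑ i, c i * v i k := by
  intro N
  induction N with
  | zero =>
    intro c hcard hc
    exact ⟨c, hc, le_trans hcard (Nat.zero_le _), fun k => rfl⟩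
  | succ N ih =>
    intro c hcard hc
    by_cases hle : (univ.filter fun i => c i ≠ 0).card ≤ Fintype.card κ
    · exact ⟨c, hc, hle, fun k => rfl⟩
    push_neg at hle
    set s : Finset (Fin n) := univ.filter fun i => c i ≠ 0 with hs
    have hnli : ¬ LinearIndependent ℝ (fun i : s => v i) := by
      intro h
      have h2 := h.fintype_card_le_finrank
      rw [Module.finrank_fintype_fun_eq_card, Fintype.card_coe] at h2
      omega
    obtain ⟨g, hg0, i₁, hgi₁⟩ := Fintype.not_linearIndependent_iff.mp hnli
    set w₀ : Fin n → ℝ := fun i => if h : i ∈ s then g ⟨i, h⟩ else 0 with hw₀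
    have hw₀sum : ∀ k, ∑ i, w₀ i * v i k = 0 := by
      intro k
      have h1 : ∑ i, w₀ i * v i k = ∑ i ∈ s, w₀ i * v i k := by
        refine (Finset.sum_subset s.subset_univ (fun i _ hi => ?_)).symm
        simp [hw₀, hi]
      have h2 : ∑ i ∈ s, w₀ i * v i k = ∑ i : s, g i * v i k := by
        rw [← Finset.sum_attach s (fun i => w₀ i * v i k)]
        refine Finset.sum_congr rfl fun i _ => ?_
        simp [hw₀, i.2]
      have h3 := congrFun hg0 k
      simp only [Finset.sum_apply, Pi.smul_apply, smul_eq_mul, Pi.zero_apply] at h3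
      rw [h1, h2, h3]
    have hw₀supp : ∀ i, w₀ i ≠ 0 → i ∈ s := by
      intro i hi
      by_contra h
      simp [hw₀, h] at hi
    obtain ⟨w, hwsum, hwsupp, j, hj⟩ :
        ∃ w : Fin n → ℝ, (∀ k, ∑ i, w i * v i k = 0) ∧ (∀ i, w i ≠ 0 → i ∈ s) ∧ ∃ j, 0 < w j := by
      by_cases hpos : ∃ j, 0 < w₀ j
      · exact ⟨w₀, hw₀sum, hw₀supp, hpos⟩
      · push_neg at hpos
        refine ⟨-w₀, fun k => ?_, fun i hi => hw₀supp i (by simpa using hi), i₁, ?_⟩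
        · simp [hw₀sum k, ← Finset.sum_neg_distrib]
          rw [← neg_eq_zero] at *
          simpa [Finset.sum_neg_distrib] using hw₀sum k
        · have : w₀ i₁ ≠ 0 := by simp [hw₀, i₁.2, hgi₁]
          have := lt_of_le_of_ne (hpos i₁) this
          simpa using this
    set T : Finset (Fin n) := s.filter fun i => 0 < w i with hT
    have hjT : j ∈ T := by
      simp [hT, hwsupp j (ne_of_gt hj), hj]
    obtain ⟨i₀, hi₀T, hmin⟩ := T.exists_min_image (fun i => c i / w i) ⟨j, hjT⟩
    have hi₀s : i₀ ∈ s := (Finset.mem_filter.mp hi₀T).1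
    have hwi₀ : 0 < w i₀ := (Finset.mem_filter.mp hi₀T).2
    set t : ℝ := c i₀ / w i₀ with hts
    have ht0 : 0 ≤ t := div_nonneg (hc i₀) hwi₀.le
    set c' : Fin n → ℝ := fun i => c i - t * w i with hc'
    have hc'0 : ∀ i, 0 ≤ c' i := by
      intro i
      by_cases hwi : 0 < w i
      · have hiT : i ∈ T := Finset.mem_filter.mpr ⟨hwsupp i (ne_of_gt hwi), hwi⟩
        have := hmin i hiT
        have h2 : t * w i ≤ c i := by
          rw [hts] at *
          exact (le_div_iff₀ hwi).mp this
        simp [hc']; linarith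
      · push_neg at hwi
        have : t * w i ≤ 0 := mul_nonpos_of_nonneg_of_nonpos ht0 hwi
        have := hc i
        simp [hc']; linarith
    have hc'i₀ : c' i₀ = 0 := by
      simp only [hc', hts]
      field_simp
      ring
    have hsubset : (univ.filter fun i => c' i ≠ 0) ⊆ s.erase i₀ := by
      intro i hi
      simp only [Finset.mem_filter, Finset.mem_univ, true_and] at hi
      refine Finset.mem_erase.mpr ⟨?_, ?_⟩
      · rintro rfl; exact hi hc'i₀
      · by_contra h
        have hci : c i = 0 := by
          by_contra hci
          exact h (Finset.mem_filter.mpr ⟨Finset.mem_univ i, hci⟩)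
        have hwi : w i = 0 := by
          by_contra hwi
          exact h (hwsupp i hwi)
        simp [hc', hci, hwi] at hi
    have hcard' : (univ.filter fun i => c' i ≠ 0).card ≤ N := by
      have h1 := Finset.card_le_card hsubset
      have h2 := Finset.card_erase_of_mem hi₀s
      omega
    obtain ⟨c'', h1, h2, h3⟩ := ih c' hcard' hc'0
    refine ⟨c'', h1, h2, fun k => ?_⟩
    rw [h3 k]
    simp only [hc', sub_mul, Finset.sum_sub_distrib]
    simp only [mul_assoc, ← Finset.mul_sum, hwsum k, mul_zero, sub_zero]

private lemma exists_reweight (M n : ℕ) (hM : 1 ≤ M) (r : ℝ → ℝ)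
    (P : Fin M → Fin n → ℝ) (hPsum : ∀ m, ∑ q, P m q = 1)
    (Dq : Fin M → Fin n → ℝ) :
    ∃ c : Fin n → ℝ,
      (∀ q, 0 ≤ c q) ∧
      (∃ Q' : Finset (Fin n), Q'.card ≤ M + 3 ∧ ∀ q ∉ Q', c q = 0) ∧
      (∀ m, ∑ q, c q * P m q = 1) ∧
      (∑ q, ((1 / (M : ℝ)) * ∑ m, c q * P m q) * ∑ m, r (Dq m q) =
        ∑ q, ((1 / (M : ℝ)) * ∑ m, P m q) * ∑ m, r (Dq m q)) ∧
      (∑ q, ∑ m, c q * P m q * Dq m q = ∑ q, ∑ m, P m q * Dq m q) ∧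
      (∑ q, ⨆ m, c q * P m q = ∑ q, ⨆ m, P m q) := by
  haveI : Nonempty (Fin M) := ⟨⟨0, hM⟩⟩
  set v : Fin n → (Fin M ⊕ Fin 3) → ℝ := fun q => Sum.elim (fun m => P m q)
    (fun j => if j = 0 then ((1 / (M : ℝ)) * ∑ m, P m q) * ∑ m, r (Dq m q)
      else if j = 1 then ∑ m, P m q * Dq m q else ⨆ m, P m q) with hv
  obtain ⟨c, hc0, hcard, hkey⟩ := cone_caratheodory v n (fun _ => 1)
    (le_trans (Finset.card_le_card (Finset.subset_univ _)) (by simp)) (fun _ => zero_le_one)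
  have hkey' : ∀ k, ∑ q, c q * v q k = ∑ q, v q k := by
    intro k; rw [hkey k]; simp
  refine ⟨c, hc0, ⟨univ.filter fun i => c i ≠ 0, by simpa using hcard,
    fun q hq => by simpa using hq⟩, ?_, ?_, ?_, ?_⟩
  · intro m
    have := hkey' (Sum.inl m)
    simp only [hv, Sum.elim_inl] at this
    rw [this, hPsum m]
  · have := hkey' (Sum.inr 0)
    simp only [hv, Sum.elim_inr, if_pos rfl] at this
    calc ∑ q, ((1 / (M : ℝ)) * ∑ m, c q * P m q) * ∑ m, r (Dq m q)
        = ∑ q, c q * (((1 / (M : ℝ)) * ∑ m, P m q) * ∑ m, r (Dq m q)) := by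
          refine Finset.sum_congr rfl fun q _ => ?_
          rw [← Finset.mul_sum]; ring
      _ = ∑ q, ((1 / (M : ℝ)) * ∑ m, P m q) * ∑ m, r (Dq m q) := this
  · have := hkey' (Sum.inr 1)
    simp only [hv, Sum.elim_inr] at this
    norm_num at this
    calc ∑ q, ∑ m, c q * P m q * Dq m q
        = ∑ q, c q * ∑ m, P m q * Dq m q := by
          refine Finset.sum_congr rfl fun q _ => ?_
          rw [Finset.mul_sum]
          exact Finset.sum_congr rfl fun m _ => by ring
      _ = ∑ q, ∑ m, P m q * Dq m q := this
  · have := hkey' (Sum.inr 2)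
    simp only [hv, Sum.elim_inr] at this
    norm_num at this
    calc ∑ q, ⨆ m, c q * P m q
        = ∑ q, c q * ⨆ m, P m q := by
          refine Finset.sum_congr rfl fun q _ => ?_
          exact (Real.mul_iSup_of_nonneg (hc0 q) _).symm
      _ = ∑ q, ⨆ m, P m q := this

private lemma set_eq_lemma (M : ℕ) (hM : 1 ≤ M) (r : ℝ → ℝ) (D L : ℝ) :
    { v : ℝ | ∃ (n : ℕ), n ≤ M + 3 ∧
      ∃ (P : Fin M → Fin n → ℝ) (Dq : Fin M → Fin n → ℝ),
      (∀ m q, 0 ≤ P m q) ∧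
      (∀ m, ∑ q, P m q = 1) ∧
      (∀ m q, 0 ≤ Dq m q) ∧
      (1 / (M : ℝ)) * (∑ q, ⨆ m, P m q) ≤ L ∧
      (1 / (M : ℝ)) * (∑ q, ∑ m, P m q * Dq m q) ≤ D ∧
      v = ∑ q, ((1 / (M : ℝ)) * ∑ m, P m q) * ∑ m, r (Dq m q) } =
    { v : ℝ | ∃ (n : ℕ) (P : Fin M → Fin n → ℝ) (Dq : Fin M → Fin n → ℝ),
      (∀ m q, 0 ≤ P m q) ∧
      (∀ m, ∑ q, P m q = 1) ∧
      (∀ m q, 0 ≤ Dq m q) ∧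
      (1 / (M : ℝ)) * (∑ q, ⨆ m, P m q) ≤ L ∧
      (1 / (M : ℝ)) * (∑ q, ∑ m, P m q * Dq m q) ≤ D ∧
      v = ∑ q, ((1 / (M : ℝ)) * ∑ m, P m q) * ∑ m, r (Dq m q) } := by
  haveI : Nonempty (Fin M) := ⟨⟨0, hM⟩⟩
  ext x
  simp only [Set.mem_setOf_eq]
  constructor
  · rintro ⟨n, -, hrest⟩
    exact ⟨n, hrest⟩
  · rintro ⟨n, P, Dq, hPnn, hPsum, hDq, hL, hD, hx⟩
    obtain ⟨c, hc0, ⟨Q', hQ'card, hQ'supp⟩, hcsum, hobj, hdist, hleak⟩ :=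
      exists_reweight M n hM r P hPsum Dq
    set n' : ℕ := Q'.card with hn'
    set e : Q' ≃ Fin n' := Q'.equivFin with he
    set emb : Fin n' → Fin n := fun q' => (e.symm q' : Fin n) with hemb
    have key : ∀ f : Fin n → ℝ, (∀ q ∉ Q', f q = 0) →
        ∑ q' : Fin n', f (emb q') = ∑ q, f q := by
      intro f hf
      have h1 : ∑ q' : Fin n', f (emb q') = ∑ x : Q', f x :=
        Equiv.sum_comp e.symm (fun x : Q' => f x)
      rw [h1, Finset.sum_coe_sort Q' f]
      exact Finset.sum_subset Q'.subset_univ (fun q _ hq => hf q hq)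
    refine ⟨n', hQ'card, fun m q' => c (emb q') * P m (emb q'),
      fun m q' => Dq m (emb q'), fun m q' => mul_nonneg (hc0 _) (hPnn _ _),
      ?_, fun m q' => hDq _ _, ?_, ?_, ?_⟩
    · intro m
      rw [key (fun q => c q * P m q) (fun q hq => by simp [hQ'supp q hq])]
      exact hcsum m
    · have := key (fun q => ⨆ m, c q * P m q)
        (fun q hq => by simp [hQ'supp q hq])
      rw [this, hleak]
      exact hL
    · have := key (fun q => ∑ m, c q * P m q * Dq m q)
        (fun q hq => by simp [hQ'supp q hq])
      rw [this, hdist]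
      exact hD
    · have := key (fun q => ((1 / (M : ℝ)) * ∑ m, c q * P m q) * ∑ m, r (Dq m q))
        (fun q hq => by simp [hQ'supp q hq])
      rw [this, hobj]
      exact hx

/-- The optimal value of problem (7) when the query set is restricted to have size at most
`M + 3`. -/
noncomputable def VoptBounded (M : ℕ) (r : ℝ → ℝ) (D L : ℝ) : ℝ :=
  sInf { v : ℝ | ∃ (n : ℕ), n ≤ M + 3 ∧
    ∃ (P : Fin M → Fin n → ℝ) (Dq : Fin M → Fin n → ℝ),
    (∀ m q, 0 ≤ P m q) ∧
    (∀ m, ∑ q, P m q = 1) ∧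
    (∀ m q, 0 ≤ Dq m q) ∧
    (1 / (M : ℝ)) * (∑ q, ⨆ m, P m q) ≤ L ∧
    (1 / (M : ℝ)) * (∑ q, ∑ m, P m q * Dq m q) ≤ D ∧
    v = ∑ q, ((1 / (M : ℝ)) * ∑ m, P m q) * ∑ m, r (Dq m q) }

/-- size bound on the query set via Carathéodory: for any conditional
probability matrix `P` on a finite query set and any nonnegative distortion values `Dq`,
there are nonnegative reweighting coefficients `c`, supported on at most `M + 3` queries,
such that `P'(q|m) = c_q·P(q|m)` is again a conditional probability matrix and the
objective, distortion, and leakage of problem (7) are unchanged. Hence, restricting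
problem (7) to query sets of size at most `M + 3` does not change its optimal value. -/
theorem query_set_size_bound (M : ℕ) (hM : 1 ≤ M) (r : ℝ → ℝ)
    (n : ℕ) (P : Fin M → Fin n → ℝ)
    (hPnn : ∀ m q, 0 ≤ P m q) (hPsum : ∀ m, ∑ q, P m q = 1)
    (Dq : Fin M → Fin n → ℝ) (hDq : ∀ m q, 0 ≤ Dq m q) :
    (∃ c : Fin n → ℝ,
      (∀ q, 0 ≤ c q) ∧
      (∃ Q' : Finset (Fin n), Q'.card ≤ M + 3 ∧ ∀ q ∉ Q', c q = 0) ∧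
      (∀ m, ∑ q, c q * P m q = 1) ∧
      (∑ q, ((1 / (M : ℝ)) * ∑ m, c q * P m q) * ∑ m, r (Dq m q) =
        ∑ q, ((1 / (M : ℝ)) * ∑ m, P m q) * ∑ m, r (Dq m q)) ∧
      ((1 / (M : ℝ)) * (∑ q, ∑ m, c q * P m q * Dq m q) =
        (1 / (M : ℝ)) * (∑ q, ∑ m, P m q * Dq m q)) ∧
      ((1 / (M : ℝ)) * (∑ q, ⨆ m, c q * P m q) =
        (1 / (M : ℝ)) * (∑ q, ⨆ m, P m q))) ∧
    (∀ D L : ℝ, 0 ≤ D → 1 / (M : ℝ) ≤ L → L ≤ 1 →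
      VoptBounded M r D L = Vopt M r D L) := by
  haveI : Nonempty (Fin M) := ⟨⟨0, hM⟩⟩
  constructor
  · obtain ⟨c, hc0, hsupp, hcsum, hobj, hdist, hleak⟩ :=
      exists_reweight M n hM r P hPsum Dq
    exact ⟨c, hc0, hsupp, hcsum, hobj, congrArg _ hdist, congrArg _ hleak⟩
  · intro D L _ _ _
    show sInf _ = sInf _
    exact congrArg sInf (set_eq_lemma M hM r D L)
end
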